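/- arXiv:0811.3739 — 2 statements merged into one kernel-verified Lean document; each statement's English description precedes it below -/
import Mathlib

section
/- The six operators E₁,…,E₆ on ℂ³ ⊗ ℂ³ satisfy ∑_{k=1}^{6} E_k |ψ₂⟩⟨ψ₂| E_k† = |φ⟩⟨φ|, where ψ₂ = (|0⟩⊗|2⟩ + |2⟩⊗|0⟩)/√2 and φ = √α(β|0⟩⊗|0⟩ + |1⟩⊗|1⟩). -/
open Kronecker Matrix ComplexOrder

noncomputable section

/-- Product (simple) vector in `ℂ^a ⊗ ℂ^b`, identified with functions `Fin a × Fin b → ℂ`. -/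
def IsSimpleVec {a b : ℕ} (v : Fin a × Fin b → ℂ) : Prop :=
  ∃ (x : Fin a → ℂ) (y : Fin b → ℂ), v = fun p => x p.1 * y p.2

/-- Rank-one projection `|v⟩⟨v|`. -/
def proj {d : Type*} [Fintype d] (v : d → ℂ) : Matrix d d ℂ :=
  Matrix.vecMulVec v (star v)

/-- The standard basis vector `|i⟩` of `ℂ³`. -/
def e (i : Fin 3) : Fin 3 → ℂ := Pi.single i 1

/-- The matrix unit `|i⟩⟨j|` on `ℂ³`. -/
def u (i j : Fin 3) : Matrix (Fin 3) (Fin 3) ℂ := Matrix.single i j 1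

/-- `α = (2 − √3)/4`. -/
def α : ℝ := (2 - Real.sqrt 3) / 4

/-- `β = 2 + √3`. -/
def β : ℝ := 2 + Real.sqrt 3

/-- `√α` as a complex number. -/
def sα : ℂ := ((Real.sqrt α : ℝ) : ℂ)

/-- `√β` as a complex number. -/
def sβ : ℂ := ((Real.sqrt β : ℝ) : ℂ)

/-- `√(2αβ)` as a complex number. -/
def sγ : ℂ := ((Real.sqrt (2 * α * β) : ℝ) : ℂ)

/-- The six Kraus operators `E₁, …, E₆` on `ℂ³ ⊗ ℂ³`. -/
def E : Fin 6 → Matrix (Fin 3 × Fin 3) (Fin 3 × Fin 3) ℂ :=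
  ![sα • ((sβ • u 0 0 + u 1 1) ⊗ₖ (sβ • u 0 1 + u 1 0)),
    sα • ((u 1 0 + sβ • u 0 1) ⊗ₖ (u 1 1 + sβ • u 0 0)),
    sα • ((sβ • u 0 0 + u 1 2) ⊗ₖ (sβ • u 0 2 + u 1 0)),
    sα • ((u 1 0 + sβ • u 0 2) ⊗ₖ (u 1 2 + sβ • u 0 0)),
    u 1 1 ⊗ₖ (sγ • u 1 1 + u 2 2),
    u 2 2 ⊗ₖ (u 1 1 + sγ • u 2 2)]

/-- `ψ₁ = (|0⟩⊗|1⟩ + |1⟩⊗|0⟩)/√2`. -/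
def ψ₁ : Fin 3 × Fin 3 → ℂ :=
  ((Real.sqrt 2 : ℝ) : ℂ)⁻¹ • (fun p => e 0 p.1 * e 1 p.2 + e 1 p.1 * e 0 p.2)

/-- `ψ₂ = (|0⟩⊗|2⟩ + |2⟩⊗|0⟩)/√2`. -/
def ψ₂ : Fin 3 × Fin 3 → ℂ :=
  ((Real.sqrt 2 : ℝ) : ℂ)⁻¹ • (fun p => e 0 p.1 * e 2 p.2 + e 2 p.1 * e 0 p.2)

/-- `φ = √α(β|0⟩⊗|0⟩ + |1⟩⊗|1⟩)`. -/
def φ : Fin 3 × Fin 3 → ℂ :=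
  sα • (fun p => ((β : ℝ) : ℂ) * (e 0 p.1 * e 0 p.2) + e 1 p.1 * e 1 p.2)

/-!
Conjugating a rank-one projection gives `A |v⟩⟨v| A† = |Av⟩⟨Av|`, so it suffices to compute the
vectors `E_k ψ₂`. Only `E₃` and `E₄` (Lean's `E 2` and `E 3`) act nontrivially on `ψ₂`: each
maps it to `φ / √2`, using `√β · √β = β`, while the other four annihilate it. Hence the sum is
`2 · ½ |φ⟩⟨φ| = |φ⟩⟨φ|`.
-/

lemma mul_proj_mul_conjTranspose {m n : Type*} [Fintype m] [Fintype n] (A : Matrix m n ℂ)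
    (v : n → ℂ) : A * proj v * Aᴴ = proj (A *ᵥ v) := by
  rw [proj, proj, mul_vecMulVec, vecMulVec_mul, star_mulVec]

lemma proj_zero {d : Type*} [Fintype d] : proj (0 : d → ℂ) = 0 :=
  zero_vecMulVec _

lemma proj_smul {d : Type*} [Fintype d] (c : ℂ) (v : d → ℂ) :
    proj (c • v) = (c * star c) • proj v := by
  rw [proj, proj, star_smul, smul_vecMulVec, vecMulVec_smul, smul_smul]

lemma sβ_mul_self : sβ * sβ = β := by
  rw [sβ, ← Complex.ofReal_mul, Real.mul_self_sqrt (by unfold β; positivity)]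

lemma E_mulVec_ψ₂ (k : Fin 6) :
    E k *ᵥ ψ₂ = if k = 2 ∨ k = 3 then ((Real.sqrt 2 : ℝ) : ℂ)⁻¹ • φ else 0 := by
  fin_cases k <;> funext p <;> fin_cases p <;>
    simp [E, ψ₂, φ, u, e, mulVec, dotProduct, Fintype.sum_prod_type,
      Matrix.single, Pi.single, Function.update, sβ_mul_self] <;>
    ring

theorem kraus_maps_psi_two_to_phi : ∑ k, E k * proj ψ₂ * (E k)ᴴ = proj φ := by
  have half : ((Real.sqrt 2 : ℝ) : ℂ)⁻¹ * star ((Real.sqrt 2 : ℝ) : ℂ)⁻¹ = 2⁻¹ := by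
    rw [star_inv₀, Complex.star_def, Complex.conj_ofReal, ← mul_inv, ← Complex.ofReal_mul,
      Real.mul_self_sqrt zero_le_two, Complex.ofReal_ofNat]
  calc ∑ k, E k * proj ψ₂ * (E k)ᴴ = ∑ k, proj (E k *ᵥ ψ₂) := by
        simp only [mul_proj_mul_conjTranspose]
    _ = (2 : ℂ) • proj (((Real.sqrt 2 : ℝ) : ℂ)⁻¹ • φ) := by
        simp [Fin.sum_univ_six, E_mulVec_ψ₂, proj_zero, two_smul]
    _ = proj φ := by
        rw [proj_smul, half, smul_smul, mul_inv_cancel₀ two_ne_zero, one_smul]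
end
end

section
/- Let ρ be a density matrix on ℂ^a ⊗ ℂ^b of rank at least 2, let φ be an entangled unit vector, and suppose some separable operation {A_k ⊗ B_k}_{k=1,…,n} satisfies ∑_k (A_k ⊗ B_k) ρ (A_k ⊗ B_k)† = |φ⟩⟨φ|. Then no nonzero vector in the range (support) of ρ is a product (simple) vector. -/
/-!
As `v` lies in the range of `ρ ≥ 0`, we have `|v⟩⟨v| ≤ c ρ` for some scalar `c`. Conjugating by the
Kraus operators `E k = A k ⊗ B k` and summing gives `|E k v⟩⟨E k v| ≤ c |φ⟩⟨φ|` for every `k`, so each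
`E k v` is a multiple of `φ`. By completeness some `E k v` is nonzero, and it is a product vector
whenever `v` is one; then so would be `φ`.
-/

open Kronecker Matrix ComplexOrder

noncomputable section

open scoped MatrixOrder

section Proj

variable {d e : Type*} [Fintype d] [Fintype e]

lemma proj_mulVec (v w : d → ℂ) : proj v *ᵥ w = (star v ⬝ᵥ w) • v := by
  rw [proj, vecMulVec_mulVec, op_smul_eq_smul]

lemma proj_nonneg (v : d → ℂ) : 0 ≤ proj v :=
  (posSemidef_vecMulVec_self_star v).nonneg

lemma mul_proj_mul_conjTranspose_s12 (M : Matrix e d ℂ) (v : d → ℂ) :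
    M * proj v * Mᴴ = proj (M *ᵥ v) := by
  rw [proj, proj, mul_vecMulVec, vecMulVec_mul, star_mulVec]

lemma proj_mul_proj (v : d → ℂ) : proj v * proj v = (star v ⬝ᵥ v) • proj v := by
  rw [proj, vecMulVec_mul_vecMulVec, vecMulVec_smul]

lemma proj_isHermitian (v : d → ℂ) : (proj v).IsHermitian :=
  (posSemidef_vecMulVec_self_star v).isHermitian

-- Cauchy–Schwarz, in the form: `Q := c • 1 - proj z` with `c = ‖z‖²` satisfies `Qᴴ * Q = c • Q`.
lemma proj_le_smul_one [DecidableEq d] (z : d → ℂ) : proj z ≤ (star z ⬝ᵥ z) • 1 := by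
  obtain hz | hz := eq_or_ne z 0
  · simp [hz, proj]
  have hc : 0 < star z ⬝ᵥ z := dotProduct_star_self_pos_iff.mpr hz
  set Q := (star z ⬝ᵥ z) • 1 - proj z
  have hQ : Q.IsHermitian :=
    (isHermitian_one.smul (.of_nonneg hc.le)).sub (proj_isHermitian z)
  have hQQ : Qᴴ * Q = (star z ⬝ᵥ z) • Q := by
    rw [hQ.eq]
    simp only [Q, sub_mul, mul_sub, smul_mul, Matrix.mul_smul, one_mul, mul_one, proj_mul_proj,
      smul_sub]
    abel
  have hQ_eq : Q = (star z ⬝ᵥ z)⁻¹ • (Qᴴ * Q) := by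
    rw [hQQ, smul_smul, inv_mul_cancel₀ hc.ne', one_smul]
  change Q.PosSemidef
  rw [hQ_eq]
  exact (posSemidef_conjTranspose_mul_self Q).smul (inv_nonneg.mpr hc.le)

lemma exists_proj_le_smul_of_mem_range {ρ : Matrix d d ℂ} (hρ : 0 ≤ ρ) {v : d → ℂ}
    (hv : v ∈ LinearMap.range ρ.mulVecLin) : ∃ c : ℂ, proj v ≤ c • ρ := by
  classical
  obtain ⟨u, rfl⟩ := hv
  obtain ⟨S, rfl⟩ := CStarAlgebra.nonneg_iff_eq_star_mul_self.mp hρ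
  refine ⟨star (S *ᵥ u) ⬝ᵥ (S *ᵥ u), ?_⟩
  calc proj ((star S * S).mulVecLin u) = star S * proj (S *ᵥ u) * S := by
        rw [mulVecLin_apply, ← mulVec_mulVec, ← mul_proj_mul_conjTranspose_s12, star_eq_conjTranspose,
          conjTranspose_conjTranspose]
    _ ≤ star S * ((star (S *ᵥ u) ⬝ᵥ (S *ᵥ u)) • 1) * S :=
        star_left_conjugate_le_conjugate (proj_le_smul_one _) S
    _ = _ := by rw [Matrix.mul_smul, Matrix.smul_mul, mul_one]

lemma dotProduct_eq_zero_of_proj_le {w u : d → ℂ} {M : Matrix d d ℂ} (h : proj w ≤ M)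
    (hu : M *ᵥ u = 0) : star w ⬝ᵥ u = 0 := by
  have hnonneg := (le_iff.mp h).dotProduct_mulVec_nonneg u
  rw [sub_mulVec, hu, proj_mulVec, dotProduct_sub, dotProduct_zero, zero_sub, dotProduct_smul,
    smul_eq_mul, star_dotProduct u w, Left.nonneg_neg_iff] at hnonneg
  exact (CStarRing.mul_star_self_eq_zero_iff _).mp (le_antisymm hnonneg (mul_star_self_nonneg _))

lemma eq_smul_of_proj_le_smul_proj {w φ : d → ℂ} {c : ℂ} (hφ : star φ ⬝ᵥ φ = 1)
    (h : proj w ≤ c • proj φ) : w = (star φ ⬝ᵥ w) • φ := by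
  set u := w - (star φ ⬝ᵥ w) • φ
  have hφu : star φ ⬝ᵥ u = 0 := by
    rw [dotProduct_sub, dotProduct_smul, hφ, smul_eq_mul, mul_one, sub_self]
  have hwu : star w ⬝ᵥ u = 0 := dotProduct_eq_zero_of_proj_le h (by
    rw [smul_mulVec, proj_mulVec, hφu, zero_smul, smul_zero])
  have huu : star u ⬝ᵥ u = 0 := by
    rw [star_sub, sub_dotProduct, star_smul, smul_dotProduct, hwu, hφu, smul_zero, sub_zero]
  exact sub_eq_zero.mp (dotProduct_star_self_eq_zero.mp huu)

end Proj

lemma exists_mulVec_ne_zero_of_sum_mul_eq_one {R ι d : Type*} [Semiring R] [Fintype ι]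
    [Fintype d] [DecidableEq d] {F E : ι → Matrix d d R} (h : ∑ k, F k * E k = 1) {v : d → R}
    (hv : v ≠ 0) : ∃ k, E k *ᵥ v ≠ 0 := by
  by_contra! hE
  apply hv
  calc v = (∑ k, F k * E k) *ᵥ v := by rw [h, one_mulVec]
    _ = 0 := by simp [sum_mulVec, ← mulVec_mulVec, hE]

namespace IsSimpleVec

variable {a b : ℕ} {v : Fin a × Fin b → ℂ}

lemma smul (hv : IsSimpleVec v) (t : ℂ) : IsSimpleVec (t • v) := by
  obtain ⟨x, y, rfl⟩ := hv
  exact ⟨t • x, y, by ext p; simp [mul_assoc]⟩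

lemma kronecker_mulVec (hv : IsSimpleVec v) (A : Matrix (Fin a) (Fin a) ℂ)
    (B : Matrix (Fin b) (Fin b) ℂ) : IsSimpleVec ((A ⊗ₖ B) *ᵥ v) := by
  obtain ⟨x, y, rfl⟩ := hv
  refine ⟨A *ᵥ x, B *ᵥ y, ?_⟩
  ext p
  simp only [mulVec, dotProduct, kroneckerMap_apply, Fintype.sum_prod_type, Finset.sum_mul_sum]
  refine Finset.sum_congr rfl fun i _ => Finset.sum_congr rfl fun j _ => ?_
  ring

end IsSimpleVec

theorem sep_distillation_forces_entangled_support_general {a b n : ℕ}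
    (ρ : Matrix (Fin a × Fin b) (Fin a × Fin b) ℂ)
    (hρ : ρ.PosSemidef)
    (φ : Fin a × Fin b → ℂ) (hφ : star φ ⬝ᵥ φ = 1) (hent : ¬ IsSimpleVec φ)
    (A : Fin n → Matrix (Fin a) (Fin a) ℂ) (B : Fin n → Matrix (Fin b) (Fin b) ℂ)
    (hcomp : ∑ k, (A k ⊗ₖ B k)ᴴ * (A k ⊗ₖ B k) = 1)
    (h : ∑ k, (A k ⊗ₖ B k) * ρ * (A k ⊗ₖ B k)ᴴ = proj φ) :
    ∀ v ∈ LinearMap.range ρ.mulVecLin, v ≠ 0 → ¬ IsSimpleVec v := by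
  intro v hv hv0 hsimple
  set E := fun k => A k ⊗ₖ B k
  obtain ⟨c, hvρ⟩ := exists_proj_le_smul_of_mem_range hρ.nonneg hv
  have hle (k : Fin n) : proj (E k *ᵥ v) ≤ c • proj φ :=
    calc proj (E k *ᵥ v) = E k * proj v * (E k)ᴴ := (mul_proj_mul_conjTranspose_s12 _ _).symm
      _ ≤ ∑ j, E j * proj v * (E j)ᴴ :=
          Finset.single_le_sum (fun j _ => star_right_conjugate_nonneg (proj_nonneg v) (E j))
            (Finset.mem_univ k)
      _ ≤ ∑ j, E j * (c • ρ) * (E j)ᴴ :=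
          Finset.sum_le_sum fun j _ => star_right_conjugate_le_conjugate hvρ (E j)
      _ = c • proj φ := by simp only [Matrix.mul_smul, Matrix.smul_mul, ← Finset.smul_sum, E, h]
  obtain ⟨k, hk⟩ := exists_mulVec_ne_zero_of_sum_mul_eq_one hcomp hv0
  have hspan := eq_smul_of_proj_le_smul_proj hφ (hle k)
  have ht : star φ ⬝ᵥ (E k *ᵥ v) ≠ 0 := fun ht => hk (by rw [hspan, ht, zero_smul])
  have hφE : φ = (star φ ⬝ᵥ (E k *ᵥ v))⁻¹ • (E k *ᵥ v) := by
    rw [eq_inv_smul_iff₀ ht, ← hspan]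
  exact hent (hφE ▸ (hsimple.kronecker_mulVec (A k) (B k)).smul _)

theorem sep_distillation_forces_entangled_support {a b n : ℕ}
    (ρ : Matrix (Fin a × Fin b) (Fin a × Fin b) ℂ)
    (hρ : ρ.PosSemidef) (htr : ρ.trace = 1) (hrank : 2 ≤ ρ.rank)
    (φ : Fin a × Fin b → ℂ) (hφ : star φ ⬝ᵥ φ = 1) (hent : ¬ IsSimpleVec φ)
    (A : Fin n → Matrix (Fin a) (Fin a) ℂ) (B : Fin n → Matrix (Fin b) (Fin b) ℂ)
    (hcomp : ∑ k, (A k ⊗ₖ B k)ᴴ * (A k ⊗ₖ B k) = 1)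
    (h : ∑ k, (A k ⊗ₖ B k) * ρ * (A k ⊗ₖ B k)ᴴ = proj φ) :
    ∀ v ∈ LinearMap.range ρ.mulVecLin, v ≠ 0 → ¬ IsSimpleVec v :=
  sep_distillation_forces_entangled_support_general ρ hρ φ hφ hent A B hcomp h
end
end
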